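/- arXiv:1309.5052 — 2 statements merged into one kernel-verified Lean document; each statement's English description precedes it below -/
import Mathlib

section
/- In the field of rational functions ℚ(a, m) (the fraction field of the polynomial ring in two variables a and m over ℚ), the HOMFLY polynomial of the knot 8₉, namely P(8₉) = −2a²m⁴ + 5a²m² − 4m⁴ + 6m² − 2 + a⁴m² − a⁴ − 3a² + m⁶ − a⁻²m⁴ + 2a⁻²m² − a⁻², is not equal to the HOMFLY polynomial of the connected sum 4₁ # 4₁, namely P(4₁ # 4₁) = (m² − a² − 1 − a⁻²)². Hence the 2-bridge knot 8₉ and the 3-bridge knot 4₁ # 4₁, which have the same Jones polynomial, are distinguished by the HOMFLY polynomial. -/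
/-!
Multiplying both sides by `a⁴` turns them into polynomials in `a` and `m`. If they were equal
in `ℚ(a, m)`, the two polynomials would agree in `ℚ[a, m]`, hence at the point `a = 1, m = 0`;
but there `P(8₉)` takes the value `-7` and `P(4₁)²` the value `9`.
-/

open MvPolynomial

section Numerators

variable {R S : Type*} [CommRing R] [CommRing S]

def homflyEightNineNumerator (a m : R) : R :=
  -2 * a ^ 6 * m ^ 4 + 5 * a ^ 6 * m ^ 2 - 4 * a ^ 4 * m ^ 4 + 6 * a ^ 4 * m ^ 2 - 2 * a ^ 4
    + a ^ 8 * m ^ 2 - a ^ 8 - 3 * a ^ 6 + a ^ 4 * m ^ 6 - a ^ 2 * m ^ 4 + 2 * a ^ 2 * m ^ 2 - a ^ 2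

def homflyFigureEightNumerator (a m : R) : R :=
  a ^ 2 * m ^ 2 - a ^ 4 - a ^ 2 - 1

theorem map_homflyEightNineNumerator (f : R →+* S) (a m : R) :
    f (homflyEightNineNumerator a m) = homflyEightNineNumerator (f a) (f m) := by
  simp [homflyEightNineNumerator, map_ofNat]

theorem map_homflyFigureEightNumerator (f : R →+* S) (a m : R) :
    f (homflyFigureEightNumerator a m) = homflyFigureEightNumerator (f a) (f m) := by
  simp [homflyFigureEightNumerator]

theorem homflyEightNineNumerator_X_ne_homflyFigureEightNumerator_X_sq [CharZero R] :
    homflyEightNineNumerator (X 0 : MvPolynomial (Fin 2) R) (X 1)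
      ≠ homflyFigureEightNumerator (X 0) (X 1) ^ 2 := by
  intro h
  have h₁₀ := congrArg (eval ![1, 0]) h
  rw [map_pow, map_homflyEightNineNumerator, map_homflyFigureEightNumerator] at h₁₀
  norm_num [homflyEightNineNumerator, homflyFigureEightNumerator] at h₁₀

end Numerators

section HomflyPolynomials

variable {K : Type*} [Field K]

def homflyEightNine (a m : K) : K :=
  -2 * a ^ 2 * m ^ 4 + 5 * a ^ 2 * m ^ 2 - 4 * m ^ 4 + 6 * m ^ 2 - 2
    + a ^ 4 * m ^ 2 - a ^ 4 - 3 * a ^ 2 + m ^ 6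
    - (a⁻¹) ^ 2 * m ^ 4 + 2 * (a⁻¹) ^ 2 * m ^ 2 - (a⁻¹) ^ 2

def homflyFigureEight (a m : K) : K :=
  m ^ 2 - a ^ 2 - 1 - (a⁻¹) ^ 2

theorem homflyEightNine_eq_div {a : K} (ha : a ≠ 0) (m : K) :
    homflyEightNine a m = homflyEightNineNumerator a m / a ^ 4 := by
  rw [homflyEightNine, homflyEightNineNumerator]
  field_simp

theorem homflyFigureEight_sq_eq_div {a : K} (ha : a ≠ 0) (m : K) :
    homflyFigureEight a m ^ 2 = homflyFigureEightNumerator a m ^ 2 / a ^ 4 := by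
  rw [homflyFigureEight, homflyFigureEightNumerator]
  field_simp

theorem homflyEightNine_X_ne_homflyFigureEight_X_sq
    {R : Type*} [CommRing R] [IsDomain R] [CharZero R] :
    let ι := algebraMap (MvPolynomial (Fin 2) R) (FractionRing (MvPolynomial (Fin 2) R))
    homflyEightNine (ι (X 0)) (ι (X 1)) ≠ homflyFigureEight (ι (X 0)) (ι (X 1)) ^ 2 := by
  intro ι
  have hι : Function.Injective ι := IsFractionRing.injective _ _
  have ha : ι (X 0) ≠ 0 := (map_ne_zero_iff ι hι).mpr (X_ne_zero 0)
  rw [homflyEightNine_eq_div ha, homflyFigureEight_sq_eq_div ha, Ne,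
    div_left_inj' (pow_ne_zero 4 ha), ← map_homflyEightNineNumerator,
    ← map_homflyFigureEightNumerator, ← map_pow, hι.eq_iff]
  exact homflyEightNineNumerator_X_ne_homflyFigureEightNumerator_X_sq

end HomflyPolynomials

/-- In the field of rational functions `ℚ(a, m)`, the HOMFLY polynomial of the
2-bridge knot `8₉` differs from that of the 3-bridge knot `4₁ # 4₁ `
(which have the same Jones polynomial):
`P(8₉) = −2a²m⁴ + 5a²m² − 4m⁴ + 6m² − 2 + a⁴m² − a⁴ − 3a² + m⁶ − a⁻²m⁴ + 2a⁻²m² − a⁻²`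
is not equal to `P(4₁ # 4₁) = (m² − a² − 1 − a⁻²)²`. -/
theorem homfly_eight_nine_ne_homfly_fig8_connected_sum_fig8 :
    let a : FractionRing (MvPolynomial (Fin 2) ℚ) :=
      algebraMap (MvPolynomial (Fin 2) ℚ) _ (MvPolynomial.X 0)
    let m : FractionRing (MvPolynomial (Fin 2) ℚ) :=
      algebraMap (MvPolynomial (Fin 2) ℚ) _ (MvPolynomial.X 1)
    (-2 * a ^ 2 * m ^ 4 + 5 * a ^ 2 * m ^ 2 - 4 * m ^ 4 + 6 * m ^ 2 - 2
        + a ^ 4 * m ^ 2 - a ^ 4 - 3 * a ^ 2 + m ^ 6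
        - (a⁻¹) ^ 2 * m ^ 4 + 2 * (a⁻¹) ^ 2 * m ^ 2 - (a⁻¹) ^ 2)
      ≠ (m ^ 2 - a ^ 2 - 1 - (a⁻¹) ^ 2) ^ 2 :=
  homflyEightNine_X_ne_homflyFigureEight_X_sq
end

section
/- In the field of rational functions ℚ(a, m) (the fraction field of the polynomial ring in two variables a and m over ℚ), the HOMFLY polynomial of the 2-bridge knot K₃, namely P(K₃) = (a¹² − 2a¹⁰m² + a⁸m² + a⁸m⁴ − 2a⁶m⁴ + a⁴m⁴ + 2a⁴m² − 2a²m² + a¹⁰ − a⁶ + a⁶m² − a⁴ + 1)/a⁴, is not equal to the HOMFLY polynomial of the connected sum K₄ = 4₁ # 8₃, namely P(4₁ # 8₃) = (m² − a² − 1 − a⁻²)·(a⁸ − a⁶m² + 2a⁴m² − a²m² − a⁴ + 1)/a⁴. Hence K₃ and K₄, which have the same Jones polynomial, are distinguished by the HOMFLY polynomial. -/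
/-!
Clearing the denominator `a⁶`, an equality `P(K₃) = P(4₁) · P(8₃)` would be the polynomial
identity `a² · N(K₃) = N(4₁) · N(8₃)` between the numerators of the three HOMFLY polynomials.
Specialising at `a = m = 1` turns it into `1 = (-2) · 1`.
-/

open MvPolynomial

section Numerators

variable {R S : Type*} [CommRing R] [CommRing S]

/-- `a⁴ · P(K₃)`. -/
def homflyK3Numerator (a m : R) : R :=
  a ^ 12 - 2 * a ^ 10 * m ^ 2 + a ^ 8 * m ^ 2 + a ^ 8 * m ^ 4 - 2 * a ^ 6 * m ^ 4
    + a ^ 4 * m ^ 4 + 2 * a ^ 4 * m ^ 2 - 2 * a ^ 2 * m ^ 2 + a ^ 10 - a ^ 6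
    + a ^ 6 * m ^ 2 - a ^ 4 + 1

/-- `a⁴ · P(8₃)`. -/
def homflyEightThreeNumerator (a m : R) : R :=
  a ^ 8 - a ^ 6 * m ^ 2 + 2 * a ^ 4 * m ^ 2 - a ^ 2 * m ^ 2 - a ^ 4 + 1

theorem map_homflyK3Numerator (f : R →+* S) (a m : R) :
    f (homflyK3Numerator a m) = homflyK3Numerator (f a) (f m) := by
  simp [homflyK3Numerator, map_ofNat]

theorem map_homflyEightThreeNumerator (f : R →+* S) (a m : R) :
    f (homflyEightThreeNumerator a m) = homflyEightThreeNumerator (f a) (f m) := by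
  simp [homflyEightThreeNumerator, map_ofNat]

theorem sq_mul_homflyK3Numerator_ne_of_map_eq_one {f : R →+* ℚ} {a m : R}
    (ha : f a = 1) (hm : f m = 1) :
    a ^ 2 * homflyK3Numerator a m
      ≠ homflyFigureEightNumerator a m * homflyEightThreeNumerator a m := by
  intro h
  have h₁ := congrArg f h
  simp only [map_mul, map_pow, map_homflyK3Numerator, map_homflyFigureEightNumerator,
    map_homflyEightThreeNumerator, ha, hm] at h₁
  norm_num [homflyK3Numerator, homflyFigureEightNumerator, homflyEightThreeNumerator] at h₁

end Numerators

theorem sq_mul_homflyK3Numerator_eq_of_div_eq {K : Type*} [Field K] {a m : K} (ha : a ≠ 0)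
    (h : homflyK3Numerator a m / a ^ 4
      = (m ^ 2 - a ^ 2 - 1 - a⁻¹ ^ 2) * homflyEightThreeNumerator a m / a ^ 4) :
    a ^ 2 * homflyK3Numerator a m
      = homflyFigureEightNumerator a m * homflyEightThreeNumerator a m := by
  rw [div_left_inj' (pow_ne_zero 4 ha)] at h
  field_simp at h
  unfold homflyFigureEightNumerator
  linear_combination h

/-- In the field of rational functions `ℚ(a, m)`, the HOMFLY polynomial of the
2-bridge knot `K₃` differs from that of the connected sum `K₄ = 4₁ # 8₃`
(which have the same Jones polynomial):
`P(K₃) = (a¹² − 2a¹⁰m² + a⁸m² + a⁸m⁴ − 2a⁶m⁴ + a⁴m⁴ + 2a⁴m² − 2a²m² + a¹⁰ − a⁶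
  + a⁶m² − a⁴ + 1)/a⁴`
is not equal to
`P(4₁ # 8₃) = (m² − a² − 1 − a⁻²)·(a⁸ − a⁶m² + 2a⁴m² − a²m² − a⁴ + 1)/a⁴`. -/
theorem homfly_K3_ne_homfly_fig8_connected_sum_eight_three :
    let a : FractionRing (MvPolynomial (Fin 2) ℚ) :=
      algebraMap (MvPolynomial (Fin 2) ℚ) _ (MvPolynomial.X 0)
    let m : FractionRing (MvPolynomial (Fin 2) ℚ) :=
      algebraMap (MvPolynomial (Fin 2) ℚ) _ (MvPolynomial.X 1)
    (a ^ 12 - 2 * a ^ 10 * m ^ 2 + a ^ 8 * m ^ 2 + a ^ 8 * m ^ 4 - 2 * a ^ 6 * m ^ 4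
        + a ^ 4 * m ^ 4 + 2 * a ^ 4 * m ^ 2 - 2 * a ^ 2 * m ^ 2 + a ^ 10 - a ^ 6
        + a ^ 6 * m ^ 2 - a ^ 4 + 1) / a ^ 4
      ≠ (m ^ 2 - a ^ 2 - 1 - (a⁻¹) ^ 2)
          * (a ^ 8 - a ^ 6 * m ^ 2 + 2 * a ^ 4 * m ^ 2 - a ^ 2 * m ^ 2 - a ^ 4 + 1) / a ^ 4 := by
  intro a m h
  have hinj := IsFractionRing.injective (MvPolynomial (Fin 2) ℚ)
    (FractionRing (MvPolynomial (Fin 2) ℚ))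
  have ha : a ≠ 0 := (map_ne_zero_iff _ hinj).mpr (X_ne_zero 0)
  have hnum := sq_mul_homflyK3Numerator_eq_of_div_eq ha h
  simp only [a, m, ← map_pow, ← map_mul, ← map_homflyK3Numerator,
    ← map_homflyFigureEightNumerator, ← map_homflyEightThreeNumerator] at hnum
  exact sq_mul_homflyK3Numerator_ne_of_map_eq_one (f := eval 1) (eval_X 0) (eval_X 1)
    (hinj hnum)
end
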